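/- (GT-†–symmetry–protected quantized Berry phase.) Let n ≥ 1, and let ψ^R, ψ^L : ℝ → ℂⁿ be continuously differentiable, 2π-periodic maps with ⟪ψ^L(φ), ψ^R(φ)⟫ = 1 for all φ. Let τ be an n×n complex matrix with τ†·τ = 1 and τ·conj(τ) = 1, and suppose there are differentiable, nowhere-vanishing functions ρ^R, ρ^L : ℝ → ℂ such that for all φ, τ·conj(ψ^R(φ)) = ρ^R(φ)·ψ^L(φ) and τ·conj(ψ^L(φ)) = ρ^L(φ)·ψ^R(φ). Set I = ∫_{−π}^{π} ⟪ψ^L(φ), (ψ^R)′(φ)⟫ dφ. Then exp( I − conj(I) ) = 1; equivalently, the real part of the biorthogonal Berry phase θ^{LR} = −i·I is quantized to an integer multiple of π. -/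

import Mathlib

/-!
The GT-† relation `τ ψR* = ρR ψL` together with the binormalization pins down
`ρR = ⟪ψR, τ ψR*⟫`. Unitarity and `τ τ* = 1` make `τ` symmetric, so differentiating
gives `ρR' = 2 ρR conj A` for the Berry connection `A = ⟪ψL, ψR'⟫`. Integrating this
linear ODE over the loop, `ρR π = ρR (-π) exp (2 conj I)`; periodicity and `ρR ≠ 0`
force `exp (2 conj I) = 1`, i.e. `I ∈ π i ℤ`, whence `exp (I - conj I) = exp (2 I) = 1`.
-/

open Matrix Real

noncomputable def herm {n : ℕ} (x y : Fin n → ℂ) : ℂ :=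
  ∑ i, starRingEnd ℂ (x i) * y i

open scoped ComplexConjugate

section Herm

variable {n : ℕ}

lemma herm_eq_star_dotProduct (x y : Fin n → ℂ) : herm x y = star x ⬝ᵥ y := rfl

lemma conj_herm (x y : Fin n → ℂ) : conj (herm x y) = herm y x := by
  simp [herm, mul_comm]

lemma herm_smul_right (a : ℂ) (x y : Fin n → ℂ) : herm x (a • y) = a * herm x y := by
  simp [herm, Finset.mul_sum, mul_left_comm]

lemma herm_mulVec_star (A : Matrix (Fin n) (Fin n) ℂ) (x y : Fin n → ℂ) :
    herm x (A *ᵥ star y) = herm y (Aᵀ *ᵥ star x) := by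
  rw [herm_eq_star_dotProduct, herm_eq_star_dotProduct, dotProduct_mulVec, dotProduct_comm,
    mulVec_transpose]

lemma Continuous.herm {u v : ℝ → Fin n → ℂ} (hu : Continuous u) (hv : Continuous v) :
    Continuous fun s => herm (u s) (v s) := by
  unfold _root_.herm
  fun_prop

lemma HasDerivAt.herm {u v : ℝ → Fin n → ℂ} {u' v' : Fin n → ℂ} {t : ℝ}
    (hu : HasDerivAt u u' t) (hv : HasDerivAt v v' t) :
    HasDerivAt (fun s => herm (u s) (v s)) (herm u' (v t) + herm (u t) v') t := by
  have := HasDerivAt.fun_sum (u := Finset.univ) fun i _ =>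
    (hasDerivAt_pi.1 hu i).star.mul (hasDerivAt_pi.1 hv i)
  simpa [_root_.herm, Finset.sum_add_distrib] using this

lemma HasDerivAt.mulVec_star (A : Matrix (Fin n) (Fin n) ℂ) {u : ℝ → Fin n → ℂ}
    {u' : Fin n → ℂ} {t : ℝ} (hu : HasDerivAt u u' t) :
    HasDerivAt (fun s => A *ᵥ star (u s)) (A *ᵥ star u') t :=
  hasDerivAt_pi.2 fun j => by
    simpa only [mulVec, dotProduct, Pi.star_apply] using
      HasDerivAt.fun_sum (u := Finset.univ) fun i _ => (hasDerivAt_pi.1 hu i).star.const_mul (A j i)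

lemma hasDerivAt_herm_mulVec_star {A : Matrix (Fin n) (Fin n) ℂ} (hA : A.IsSymm)
    {u : ℝ → Fin n → ℂ} {u' : Fin n → ℂ} {t : ℝ} (hu : HasDerivAt u u' t) :
    HasDerivAt (fun s => herm (u s) (A *ᵥ star (u s))) (2 * herm u' (A *ᵥ star (u t))) t := by
  convert hu.herm (hu.mulVec_star A) using 1
  rw [herm_mulVec_star A (u t), hA.eq]
  ring

lemma eq_herm_mulVec_star_of_mulVec_star_eq_smul {A : Matrix (Fin n) (Fin n) ℂ}
    {x y : Fin n → ℂ} {c : ℂ} (h : A *ᵥ star x = c • y) (hyx : herm y x = 1) :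
    c = herm x (A *ᵥ star x) := by
  rw [h, herm_smul_right, ← conj_herm, hyx, map_one, mul_one]

end Herm

lemma Matrix.isSymm_of_conjTranspose_mul_self_eq_one_of_mul_map_conj_eq_one {m : Type*}
    [Fintype m] [DecidableEq m] {A : Matrix m m ℂ} (h₁ : Aᴴ * A = 1)
    (h₂ : A * A.map conj = 1) : A.IsSymm := by
  have hH : Aᴴ = A.map conj := by
    calc Aᴴ = Aᴴ * (A * A.map conj) := by rw [h₂, Matrix.mul_one]
      _ = A.map conj := by rw [← Matrix.mul_assoc, h₁, Matrix.one_mul]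
  ext i j
  have := congrFun (congrFun hH i) j
  simp only [conjTranspose_apply, map_apply, starRingEnd_apply, star_inj] at this
  exact this

lemma eq_mul_exp_integral_of_hasDerivAt {ρ g : ℝ → ℂ} (hg : Continuous g)
    (hρ : ∀ t, HasDerivAt ρ (ρ t * g t) t) (a b : ℝ) :
    ρ b = ρ a * Complex.exp (∫ s in a..b, g s) := by
  set K : ℝ → ℂ := fun t => ∫ s in a..t, g s
  have hK : ∀ t, HasDerivAt K (g t) t := fun t => (hg.integral_hasStrictDerivAt a t).hasDerivAt
  have hG : ∀ t, HasDerivAt (fun s => ρ s * Complex.exp (-K s)) 0 t := fun t =>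
    ((hρ t).mul (hK t).neg.cexp).congr_deriv (by simp only [Pi.neg_apply]; ring)
  have hconst := is_const_of_deriv_eq_zero (fun t => (hG t).differentiableAt)
    (fun t => (hG t).deriv) b a
  simp only [K, intervalIntegral.integral_same, neg_zero, Complex.exp_zero, mul_one] at hconst
  rw [← hconst, mul_assoc, ← Complex.exp_add, neg_add_cancel, Complex.exp_zero, mul_one]

lemma Complex.exp_sub_conj_eq_one_of_exp_two_mul_conj_eq_one {z : ℂ}
    (h : Complex.exp (2 * conj z) = 1) : Complex.exp (z - conj z) = 1 := by
  obtain ⟨k, hk⟩ := Complex.exp_eq_one_iff.1 h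
  refine Complex.exp_eq_one_iff.2 ⟨-k, ?_⟩
  have hz : z = conj (conj z) := (Complex.conj_conj z).symm
  rw [hz, show conj z = k * π * Complex.I by linear_combination hk / 2]
  simp
  ring

theorem GTdagger_protected_quantized_berry_phase_general (n : ℕ)
    (ψR ψL ψR' ψL' : ℝ → Fin n → ℂ)
    (hdR : ∀ i t, HasDerivAt (fun s => ψR s i) (ψR' t i) t)
    (hdL : ∀ i t, HasDerivAt (fun s => ψL s i) (ψL' t i) t)
    (hcR : ∀ i, Continuous fun t => ψR' t i)
    (hperR : ∀ φ, ψR (φ + 2 * π) = ψR φ)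
    (hnorm : ∀ φ, herm (ψL φ) (ψR φ) = 1)
    (τ : Matrix (Fin n) (Fin n) ℂ)
    (hτ1 : τᴴ * τ = 1) (hτ2 : τ * τ.map (starRingEnd ℂ) = 1)
    (ρR : ℝ → ℂ)
    (hρRne : ∀ φ, ρR φ ≠ 0)
    (hGTR : ∀ φ, τ.mulVec (fun i => starRingEnd ℂ (ψR φ i)) = ρR φ • ψL φ) :
    Complex.exp ((∫ φ in (-π)..π, herm (ψL φ) (ψR' φ)) -
      starRingEnd ℂ (∫ φ in (-π)..π, herm (ψL φ) (ψR' φ))) = 1 := by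
  set f : ℝ → ℂ := fun φ => herm (ψL φ) (ψR' φ)
  have hψR (t : ℝ) : HasDerivAt ψR (ψR' t) t := hasDerivAt_pi.2 fun i => hdR i t
  have hψL : Continuous ψL := continuous_iff_continuousAt.2 fun t =>
    (hasDerivAt_pi.2 fun i => hdL i t).continuousAt
  have hρR : ρR = fun φ => herm (ψR φ) (τ *ᵥ star (ψR φ)) :=
    funext fun φ => eq_herm_mulVec_star_of_mulVec_star_eq_smul (hGTR φ) (hnorm φ)
  have hτ : τ.IsSymm :=
    isSymm_of_conjTranspose_mul_self_eq_one_of_mul_map_conj_eq_one hτ1 hτ2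
  have hρR' (t : ℝ) : HasDerivAt ρR (ρR t * (2 * conj (f t))) t := by
    have h := hasDerivAt_herm_mulVec_star hτ (hψR t)
    rw [← hρR, show τ *ᵥ star (ψR t) = ρR t • ψL t from hGTR t, herm_smul_right,
      ← conj_herm] at h
    exact h.congr_deriv (by ring)
  have hρR_period : ρR π = ρR (-π) := by
    rw [hρR]
    dsimp only
    rw [← hperR (-π), show -π + 2 * π = π by ring]
  have hf : Continuous f := hψL.herm (continuous_pi hcR)
  have hexp := eq_mul_exp_integral_of_hasDerivAt (by fun_prop) hρR' (-π) π
  rw [hρR_period, eq_comm, mul_eq_left₀ (hρRne (-π)), intervalIntegral.integral_const_mul,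
    intervalIntegral.intervalIntegral_conj] at hexp
  exact Complex.exp_sub_conj_eq_one_of_exp_two_mul_conj_eq_one hexp

/-- **GT-†–symmetry–protected quantized Berry phase.**
For self-closed (2π-periodic, continuously differentiable) binormalized right/left
eigenvector families `ψR, ψL` along a loop in the `GT`-invariant subspace, with a
symmetric unitary `τ` (`τ† τ = 1`, `τ conj(τ) = 1`) exchanging right and left
eigenvectors of the same state via nowhere-vanishing factors `ρR, ρL`, the biorthogonal
Berry-phase integral `I = ∫_{-π}^{π} ⟪ψL, ψR'⟫ dφ` satisfies `exp (I - conj I) = 1`: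
the real part of the biorthogonal Berry phase `θ^{LR} = -i I` is quantized to an
integer multiple of `π`. -/
theorem GTdagger_protected_quantized_berry_phase (n : ℕ) (hn : 1 ≤ n)
    (ψR ψL ψR' ψL' : ℝ → Fin n → ℂ)
    (hdR : ∀ i t, HasDerivAt (fun s => ψR s i) (ψR' t i) t)
    (hdL : ∀ i t, HasDerivAt (fun s => ψL s i) (ψL' t i) t)
    (hcR : ∀ i, Continuous fun t => ψR' t i)
    (hcL : ∀ i, Continuous fun t => ψL' t i)
    (hperR : ∀ φ, ψR (φ + 2 * π) = ψR φ)
    (hperL : ∀ φ, ψL (φ + 2 * π) = ψL φ)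
    (hnorm : ∀ φ, herm (ψL φ) (ψR φ) = 1)
    (τ : Matrix (Fin n) (Fin n) ℂ)
    (hτ1 : τᴴ * τ = 1) (hτ2 : τ * τ.map (starRingEnd ℂ) = 1)
    (ρR ρL : ℝ → ℂ)
    (hρRd : Differentiable ℝ ρR) (hρLd : Differentiable ℝ ρL)
    (hρRne : ∀ φ, ρR φ ≠ 0) (hρLne : ∀ φ, ρL φ ≠ 0)
    (hGTR : ∀ φ, τ.mulVec (fun i => starRingEnd ℂ (ψR φ i)) = ρR φ • ψL φ)
    (hGTL : ∀ φ, τ.mulVec (fun i => starRingEnd ℂ (ψL φ i)) = ρL φ • ψR φ) :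
    Complex.exp ((∫ φ in (-π)..π, herm (ψL φ) (ψR' φ)) -
      starRingEnd ℂ (∫ φ in (-π)..π, herm (ψL φ) (ψR' φ))) = 1 :=
  GTdagger_protected_quantized_berry_phase_general n ψR ψL ψR' ψL' hdR hdL hcR hperR hnorm τ hτ1 hτ2
    ρR hρRne hGTR
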